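/- arXiv:1203.0405 — 2 statements merged into one kernel-verified Lean document; each statement's English description precedes it below -/
import Mathlib

section
/- For a birth–death chain on ℤ started at 0 with a < 0 < b, the expected time to hit the set {a, b}, restricted to the event of hitting b first, is bounded above by Σ_{m=1}^{b} Σ_{k=0}^{m-1-a} r_{m-1} / (ω_{m-k-1}^+ · r_{m-k-1}), where r_m is the resistance of edge {m, m+1} and ω_m^+ the upward jump probability at m. -/
/-!
Reversibility `ωm m * r (m - 1) = ωp m * r m` turns the equation `f = s + P f` on `(a, b)` into
Kirchhoff's law for the current `i m = (f m - f (m + 1)) / r m` through the edge `{m, m + 1}`: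
`i m = i (m - 1) + s m / (ωp m * r m)`. Hence `i m = i a + ∑_{a < j ≤ m} s j / (ωp j * r j)`, and
if `s ≥ 0` and `f a ≤ f b`, then `∑_{a ≤ m < b} r m * i m = f a - f b ≤ 0` forces `i a ≤ 0`.
With `s = 0` this makes `h` nondecreasing, so `0 ≤ h ≤ 1`; with `s = h` it bounds the current
of `g`, and `g 0 = ∑_{0 ≤ m < b} r m * i m`.
-/

open Finset

section Telescoping

variable {M : Type*} [AddCommGroup M]

theorem Int.sum_Ico_sub_add_one (f : ℤ → M) {a b : ℤ} (hab : a ≤ b) :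
    ∑ m ∈ Ico a b, (f m - f (m + 1)) = f a - f b := by
  induction b, hab using Int.leInduction with
  | base => simp
  | succ b hab ih =>
    rw [← insert_Ico_right_eq_Ico_add_one hab, sum_insert (by simp), ih]
    abel

theorem Int.sum_Ioc_sub_sub_one (f : ℤ → M) {a b : ℤ} (hab : a ≤ b) :
    ∑ m ∈ Ioc a b, (f m - f (m - 1)) = f b - f a := by
  induction b, hab using Int.leInduction with
  | base => simp
  | succ b hab ih =>
    rw [← insert_Ioc_right_eq_Ioc_add_one hab, sum_insert (by simp), ih, add_sub_cancel_right]
    abel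

end Telescoping

theorem Int.sum_Icc_sum_Icc_reflect {M : Type*} [AddCommMonoid M] (F : ℤ → ℤ → M) (a b : ℤ) :
    ∑ m ∈ Icc 1 b, ∑ k ∈ Icc 0 (m - 1 - a), F (m - 1) (m - k - 1) =
      ∑ m ∈ Ico 0 b, ∑ j ∈ Icc a m, F m j := by
  refine sum_nbij' (· - 1) (· + 1) (fun m ↦ by simp only [mem_Icc, mem_Ico]; omega)
    (fun m ↦ by simp only [mem_Icc, mem_Ico]; omega) (fun _ _ ↦ by omega) (fun _ _ ↦ by omega)
    fun m _ ↦ ?_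
  refine sum_nbij' (m - 1 - ·) (m - 1 - ·) (fun k ↦ by simp only [mem_Icc]; omega)
    (fun k ↦ by simp only [mem_Icc]; omega) (fun _ _ ↦ by omega) (fun _ _ ↦ by omega)
    fun k _ ↦ ?_
  congr 1
  ring

namespace BirthDeath

noncomputable def current (r f : ℤ → ℝ) (m : ℤ) : ℝ := (f m - f (m + 1)) / r m

variable {ωp ωm r f : ℤ → ℝ} {m : ℤ}

theorem mul_current (hr : r m ≠ 0) : r m * current r f m = f m - f (m + 1) :=
  mul_div_cancel₀ _ hr

theorem current_nonpos_iff (hr : 0 < r m) : current r f m ≤ 0 ↔ f m ≤ f (m + 1) := by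
  rw [current, div_le_iff₀ hr, zero_mul, sub_nonpos]

theorem current_eq_current_sub_one_add {s : ℝ} (hrev : ωm m * r (m - 1) = ωp m * r m)
    (hωp : ωp m ≠ 0) (hr : r m ≠ 0) (hr' : r (m - 1) ≠ 0)
    (hf : f m = s + ωm m * f (m - 1) + (1 - ωm m - ωp m) * f m + ωp m * f (m + 1)) :
    current r f m = current r f (m - 1) + s / (ωp m * r m) := by
  rw [current, current, sub_add_cancel]
  field_simp
  linear_combination r (m - 1) * hf + (f (m - 1) - f m) * hrev

section Network

variable (hωp : ∀ m, 0 < ωp m) (hr : ∀ m, 0 < r m) (hrev : ∀ m, ωm m * r (m - 1) = ωp m * r m)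
include hωp hr hrev

theorem current_le_sum_source {a b : ℤ} {s : ℤ → ℝ}
    (hf : ∀ m, a < m → m < b →
      f m = s m + ωm m * f (m - 1) + (1 - ωm m - ωp m) * f m + ωp m * f (m + 1))
    (hs : ∀ m, a < m → m < b → 0 ≤ s m) (hfab : f a ≤ f b) (ham : a ≤ m) (hmb : m < b) :
    current r f m ≤ ∑ j ∈ Ioc a m, s j / (ωp j * r j) := by
  set S : ℤ → ℝ := fun n ↦ ∑ j ∈ Ioc a n, s j / (ωp j * r j)
  have hS : ∀ n < b, 0 ≤ S n := fun n hnb ↦ sum_nonneg fun j hj ↦ by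
    rw [mem_Ioc] at hj
    exact div_nonneg (hs j hj.1 (by omega)) (mul_pos (hωp j) (hr j)).le
  have hacc : ∀ n, a ≤ n → n < b → current r f n = current r f a + S n := by
    intro n han hnb
    rw [← sub_eq_iff_eq_add', ← Int.sum_Ioc_sub_sub_one _ han]
    refine sum_congr rfl fun j hj ↦ ?_
    rw [mem_Ioc] at hj
    rw [current_eq_current_sub_one_add (hrev j) (hωp j).ne' (hr j).ne' (hr _).ne'
      (hf j hj.1 (by omega)), add_sub_cancel_left]
  have hstart : current r f a ≤ 0 := by
    by_contra! hpos
    have : 0 < ∑ m ∈ Ico a b, r m * current r f m := by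
      refine sum_pos (fun n hn ↦ ?_) (nonempty_Ico.2 (ham.trans_lt hmb))
      rw [mem_Ico] at hn
      rw [hacc n hn.1 hn.2]
      exact mul_pos (hr n) (by linarith [hS n hn.2])
    simp_rw [mul_current (hr _).ne'] at this
    rw [Int.sum_Ico_sub_add_one f (ham.trans hmb.le)] at this
    linarith
  linarith [hacc m ham hmb]

theorem harmonic_mem_Icc {a b : ℤ} {h : ℤ → ℝ} (hha : h a = 0) (hhb : h b = 1)
    (hharm : ∀ m, a < m → m < b →
      h m = ωm m * h (m - 1) + (1 - ωm m - ωp m) * h m + ωp m * h (m + 1))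
    (ham : a ≤ m) (hmb : m ≤ b) : h m ∈ Set.Icc 0 1 := by
  have hmono : MonotoneOn h (Set.Icc a b) := by
    refine monotoneOn_of_le_add_one Set.ordConnected_Icc fun n _ hn hn1 ↦ ?_
    rw [← current_nonpos_iff (hr n)]
    simpa using current_le_sum_source hωp hr hrev (s := 0)
      (fun k h1 h2 ↦ by rw [Pi.zero_apply, zero_add]; exact hharm k h1 h2)
      (fun _ _ _ ↦ le_rfl) (by linarith) hn.1 (by linarith [hn1.2])
  have hab : a ≤ b := ham.trans hmb
  rw [← hha, ← hhb]
  exact ⟨hmono ⟨le_rfl, hab⟩ ⟨ham, hmb⟩ ham, hmono ⟨ham, hmb⟩ ⟨hab, le_rfl⟩ hmb⟩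

theorem mul_current_le_sum_Icc {a b : ℤ} {g s : ℤ → ℝ}
    (hg : ∀ m, a < m → m < b →
      g m = s m + ωm m * g (m - 1) + (1 - ωm m - ωp m) * g m + ωp m * g (m + 1))
    (hs : ∀ m, a < m → m < b → s m ∈ Set.Icc 0 1) (hgab : g a = g b)
    (ham : a ≤ m) (hmb : m < b) :
    r m * current r g m ≤ ∑ j ∈ Icc a m, r m / (ωp j * r j) := by
  have hle := current_le_sum_source hωp hr hrev hg (fun j h1 h2 ↦ (hs j h1 h2).1) hgab.le ham hmb
  have hsum : ∑ j ∈ Ioc a m, s j / (ωp j * r j) ≤ ∑ j ∈ Icc a m, 1 / (ωp j * r j) :=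
    calc _ ≤ ∑ j ∈ Ioc a m, 1 / (ωp j * r j) := sum_le_sum fun j hj ↦ by
          rw [mem_Ioc] at hj
          exact div_le_div_of_nonneg_right (hs j hj.1 (by omega)).2 (mul_pos (hωp j) (hr j)).le
      _ ≤ _ := sum_le_sum_of_subset_of_nonneg Ioc_subset_Icc_self fun j _ _ ↦
          (one_div_pos.2 (mul_pos (hωp j) (hr j))).le
  calc r m * current r g m ≤ r m * ∑ j ∈ Icc a m, 1 / (ωp j * r j) :=
        mul_le_mul_of_nonneg_left (hle.trans hsum) (hr m).le
    _ = _ := by simp_rw [mul_sum, mul_one_div]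

end Network

end BirthDeath

open BirthDeath in
theorem stmt12_general (ωp ωm : ℤ → ℝ) (r : ℤ → ℝ)
    (hωp : ∀ m, 0 < ωp m)
    (hr : ∀ m, 0 < r m) (hrev : ∀ m, ωm m * r (m - 1) = ωp m * r m)
    (a b : ℤ) (ha : a < 0) (hb : 0 < b)
    (h : ℤ → ℝ) (hha : h a = 0) (hhb : h b = 1)
    (hharm : ∀ m, a < m → m < b →
      h m = ωm m * h (m - 1) + (1 - ωm m - ωp m) * h m + ωp m * h (m + 1))
    (g : ℤ → ℝ) (hga : g a = 0) (hgb : g b = 0)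
    (hg : ∀ m, a < m → m < b →
      g m = h m + ωm m * g (m - 1) + (1 - ωm m - ωp m) * g m + ωp m * g (m + 1)) :
    g 0 ≤ ∑ m ∈ Finset.Icc (1 : ℤ) b, ∑ k ∈ Finset.Icc (0 : ℤ) (m - 1 - a),
      r (m - 1) / (ωp (m - k - 1) * r (m - k - 1)) := by
  have hh : ∀ m, a < m → m < b → h m ∈ Set.Icc 0 1 := fun m ham hmb ↦
    harmonic_mem_Icc hωp hr hrev hha hhb hharm ham.le hmb.le
  calc g 0 = ∑ m ∈ Ico 0 b, r m * current r g m := by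
        simp_rw [mul_current (hr _).ne']
        rw [Int.sum_Ico_sub_add_one g hb.le, hgb, sub_zero]
    _ ≤ ∑ m ∈ Ico 0 b, ∑ j ∈ Icc a m, r m / (ωp j * r j) := sum_le_sum fun m hm ↦ by
          rw [mem_Ico] at hm
          exact mul_current_le_sum_Icc hωp hr hrev hg hh
            (hga.trans hgb.symm) (by omega) hm.2
    _ = _ := (Int.sum_Icc_sum_Icc_reflect (fun m j ↦ r m / (ωp j * r j)) a b).symm

/-- For a birth–death chain on `ℤ` started at `0` with `a < 0 < b`, the expected time to
hit `{a, b}` restricted to the event of hitting `b` first (the function `g` solving the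
associated Poisson equation, where `h` is the probability of hitting `b` before `a`) is
bounded above by `∑_{m=1}^{b} ∑_{k=0}^{m-1-a} r_{m-1}/(ω_{m-k-1}^+ · r_{m-k-1})`. -/
theorem stmt12 (ωp ωm : ℤ → ℝ) (r : ℤ → ℝ)
    (hωp : ∀ m, 0 < ωp m) (hωm : ∀ m, 0 < ωm m) (hsum : ∀ m, ωm m + ωp m ≤ 1)
    (hr : ∀ m, 0 < r m) (hrev : ∀ m, ωm m * r (m - 1) = ωp m * r m)
    (a b : ℤ) (ha : a < 0) (hb : 0 < b)
    (h : ℤ → ℝ) (hha : h a = 0) (hhb : h b = 1)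
    (hharm : ∀ m, a < m → m < b →
      h m = ωm m * h (m - 1) + (1 - ωm m - ωp m) * h m + ωp m * h (m + 1))
    (g : ℤ → ℝ) (hga : g a = 0) (hgb : g b = 0)
    (hg : ∀ m, a < m → m < b →
      g m = h m + ωm m * g (m - 1) + (1 - ωm m - ωp m) * g m + ωp m * g (m + 1)) :
    g 0 ≤ ∑ m ∈ Finset.Icc (1 : ℤ) b, ∑ k ∈ Finset.Icc (0 : ℤ) (m - 1 - a),
      r (m - 1) / (ωp (m - k - 1) * r (m - k - 1)) :=
  stmt12_general ωp ωm r hωp hr hrev a b ha hb h hha hhb hharm g hga hgb hg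
end

section
/- For the random walk on a finite weighted graph started at a vertex x, the expected time to hit a set B of vertices is at most R_eff(x, B) · μ(V), where R_eff(x,B) is the effective resistance between x and B and μ(V) = Σ_{y∈V} μ({y}) is the total invariant measure (sum of vertex conductances). -/
/-!
Let `a = u x > 0` and clip `u` at level `a`: the potential `f = min u a / a` is admissible for
the variational problem defining the effective conductance. Clipping at a level does not
increase the Dirichlet form against `u`, and summation by parts turns that form into
`∑ y, min (u y) a * μ y ≤ a * μ(V)`, since `u` is harmonic up to the constant source `1`
off `B` (i.e. `∑ z, c y z * (u y - u z) = μ y`) and vanishes on `B`. Hence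
`C_eff(x, B) ≤ E(f) ≤ μ(V) / a`. Connectivity makes `C_eff(x, B)` positive: along a path
from `x` to `B` of length `k` some increment of an admissible potential is at least `1 / k`.
-/

/-- The Dirichlet energy of a potential `f` in a finite network with conductances `c`. -/
noncomputable def energyFn {V : Type*} [Fintype V] (c : V → V → ℝ) (f : V → ℝ) : ℝ :=
  (1 / 2) * ∑ u, ∑ v, c u v * (f u - f v) ^ 2

/-- The effective conductance between `x` and a set `B`, via the Dirichlet variational
principle (potentials equal to `1` at `x` and `0` on `B`). -/
noncomputable def effCondSet {V : Type*} [Fintype V] (c : V → V → ℝ) (x : V)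
    (B : Finset V) : ℝ :=
  sInf {E : ℝ | ∃ f : V → ℝ, f x = 1 ∧ (∀ b ∈ B, f b = 0) ∧ E = energyFn c f}

/-- The effective resistance between `x` and a set `B`. -/
noncomputable def effResSet {V : Type*} [Fintype V] (c : V → V → ℝ) (x : V)
    (B : Finset V) : ℝ :=
  (effCondSet c x B)⁻¹

open Finset

lemma exists_div_le_abs_sub_succ (s : ℕ → ℝ) {k : ℕ} (hk : 0 < k) :
    ∃ i < k, |s 0 - s k| / k ≤ |s i - s (i + 1)| := by
  have hsum : ∑ _i ∈ range k, |s 0 - s k| / k ≤ ∑ i ∈ range k, |s i - s (i + 1)| := by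
    rw [sum_const, card_range, nsmul_eq_mul, mul_div_cancel₀ _ (by positivity),
      ← sum_range_sub']
    exact abs_sum_le_sum_abs _ _
  obtain ⟨i, hi, hle⟩ := exists_le_of_sum_le (nonempty_range_iff.2 hk.ne') hsum
  exact ⟨i, mem_range.1 hi, hle⟩

lemma sq_min_sub_min_le (s t a : ℝ) :
    (min s a - min t a) ^ 2 ≤ (min s a - min t a) * (s - t) := by
  rcases le_total s a with hs | hs <;> rcases le_total t a with ht | ht <;>
    simp only [min_eq_left, min_eq_right, hs, ht] <;> nlinarith

section Network

variable {V : Type*} [Fintype V] {c : V → V → ℝ}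

lemma energyFn_nonneg (hc0 : ∀ p q, 0 ≤ c p q) (f : V → ℝ) : 0 ≤ energyFn c f :=
  mul_nonneg (by norm_num) <| sum_nonneg fun p _ => sum_nonneg fun q _ =>
    mul_nonneg (hc0 p q) (sq_nonneg _)

lemma energyFn_div_const (f : V → ℝ) (a : ℝ) :
    energyFn c (fun y => f y / a) = energyFn c f / a ^ 2 := by
  simp only [energyFn, ← sub_div, div_pow, ← mul_div_assoc, ← sum_div]

lemma mul_sq_sub_le_energyFn (hc0 : ∀ p q, 0 ≤ c p q) (hcsym : ∀ p q, c p q = c q p)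
    (f : V → ℝ) (p q : V) : c p q * (f p - f q) ^ 2 ≤ energyFn c f := by
  obtain rfl | hpq := eq_or_ne p q
  · simpa using energyFn_nonneg hc0 f
  have hpair := add_le_sum (s := univ ×ˢ univ)
    (f := fun e : V × V => c e.1 e.2 * (f e.1 - f e.2) ^ 2)
    (fun e _ => mul_nonneg (hc0 _ _) (sq_nonneg _)) (mem_univ (p, q)) (mem_univ (q, p))
    fun h => hpq (congrArg Prod.fst h)
  rw [sum_product' (f := fun p q => c p q * (f p - f q) ^ 2), hcsym q p,
    sub_sq_comm (f q)] at hpair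
  rw [energyFn]
  linarith

lemma sum_sum_mul_sub_mul_sub (hcsym : ∀ p q, c p q = c q p) (u v : V → ℝ) :
    ∑ y, ∑ z, c y z * ((v y - v z) * (u y - u z)) =
      2 * ∑ y, v y * ∑ z, c y z * (u y - u z) := by
  have hswap : ∑ y, ∑ z, c y z * (v z * (u z - u y)) =
      ∑ y, ∑ z, c y z * (v y * (u y - u z)) := by
    rw [sum_comm]
    exact sum_congr rfl fun y _ => sum_congr rfl fun z _ => by rw [hcsym]
  calc ∑ y, ∑ z, c y z * ((v y - v z) * (u y - u z))
      = ∑ y, ∑ z, (c y z * (v y * (u y - u z)) + c y z * (v z * (u z - u y))) :=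
        sum_congr rfl fun y _ => sum_congr rfl fun z _ => by ring
    _ = 2 * ∑ y, v y * ∑ z, c y z * (u y - u z) := by
        simp only [sum_add_distrib]
        rw [hswap, ← two_mul]
        simp only [mul_sum, mul_left_comm (c _ _)]

lemma energyFn_min_le (hc0 : ∀ p q, 0 ≤ c p q) (hcsym : ∀ p q, c p q = c q p)
    (u : V → ℝ) (a : ℝ) :
    energyFn c (fun y => min (u y) a) ≤ ∑ y, min (u y) a * ∑ z, c y z * (u y - u z) := by
  calc energyFn c (fun y => min (u y) a)
      ≤ 1 / 2 * ∑ y, ∑ z, c y z * ((min (u y) a - min (u z) a) * (u y - u z)) := by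
        refine mul_le_mul_of_nonneg_left (sum_le_sum fun y _ => sum_le_sum fun z _ => ?_)
          (by norm_num)
        exact mul_le_mul_of_nonneg_left (sq_min_sub_min_le _ _ _) (hc0 y z)
    _ = _ := by rw [sum_sum_mul_sub_mul_sub hcsym]; ring

lemma effCondSet_nonneg (hc0 : ∀ p q, 0 ≤ c p q) (x : V) (B : Finset V) :
    0 ≤ effCondSet c x B :=
  Real.sInf_nonneg fun _ ⟨f, _, _, hE⟩ => hE ▸ energyFn_nonneg hc0 f

lemma effCondSet_le_energyFn (hc0 : ∀ p q, 0 ≤ c p q) {x : V} {B : Finset V} {f : V → ℝ}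
    (hfx : f x = 1) (hfB : ∀ b ∈ B, f b = 0) : effCondSet c x B ≤ energyFn c f :=
  csInf_le ⟨0, fun _ ⟨g, _, _, hE⟩ => hE ▸ energyFn_nonneg hc0 g⟩ ⟨f, hfx, hfB, rfl⟩

lemma div_sq_le_energyFn_of_walk (hc0 : ∀ p q, 0 ≤ c p q) (hcsym : ∀ p q, c p q = c q p)
    {k : ℕ} (hk : 0 < k) {w : ℕ → V} {m : ℝ} (hm : ∀ i < k, m ≤ c (w i) (w (i + 1)))
    {f : V → ℝ} (hf : f (w 0) - f (w k) = 1) : m / k ^ 2 ≤ energyFn c f := by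
  obtain ⟨i, hik, hi⟩ := exists_div_le_abs_sub_succ (fun i => f (w i)) hk
  rw [hf, abs_one] at hi
  have hsq : 1 / (k : ℝ) ^ 2 ≤ (f (w i) - f (w (i + 1))) ^ 2 := by
    simpa only [one_div, inv_pow, sq_abs] using pow_le_pow_left₀ (by positivity) hi 2
  calc m / k ^ 2 = m * (1 / (k : ℝ) ^ 2) := by ring
    _ ≤ c (w i) (w (i + 1)) * (f (w i) - f (w (i + 1))) ^ 2 :=
        mul_le_mul (hm i hik) hsq (by positivity) (hc0 _ _)
    _ ≤ energyFn c f := mul_sq_sub_le_energyFn hc0 hcsym f _ _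

lemma effCondSet_pos_of_walk (hc0 : ∀ p q, 0 ≤ c p q)
    (hcsym : ∀ p q, c p q = c q p) {x b : V} {B : Finset V} (hxB : x ∉ B) (hb : b ∈ B)
    {k : ℕ} {w : ℕ → V} (hw0 : w 0 = x) (hwk : w k = b)
    (hw : ∀ i < k, 0 < c (w i) (w (i + 1))) : 0 < effCondSet c x B := by
  classical
  have hk : 0 < k := Nat.pos_of_ne_zero fun h => hxB (by rwa [← hw0, ← h, hwk])
  have hrange : (range k).Nonempty := nonempty_range_iff.2 hk.ne'
  set m := (range k).inf' hrange fun i => c (w i) (w (i + 1))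
  have hm : 0 < m := (lt_inf'_iff hrange).2 fun i hi => hw i (mem_range.1 hi)
  refine (div_pos hm (by positivity : (0 : ℝ) < k ^ 2)).trans_le
    (le_csInf ⟨_, fun y => if y = x then 1 else 0, if_pos rfl, ?_, rfl⟩ ?_)
  · exact fun b' hb' => if_neg fun (h : b' = x) => hxB (h ▸ hb')
  · rintro _ ⟨f, hfx, hfB, rfl⟩
    refine div_sq_le_energyFn_of_walk (w := w) (m := m) hc0 hcsym hk
      (fun i hi => inf'_le _ (mem_range.2 hi)) ?_
    rw [hw0, hwk, hfx, hfB b hb, sub_zero]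

lemma effCondSet_mul_le (hc0 : ∀ p q, 0 ≤ c p q) (hcsym : ∀ p q, c p q = c q p)
    {μ : V → ℝ} (hμ0 : ∀ y, 0 ≤ μ y) {B : Finset V} {u : V → ℝ}
    (hub : ∀ y ∈ B, u y = 0)
    (hLu : ∀ y ∉ B, ∑ z, c y z * (u y - u z) = μ y) {x : V} (hux : 0 < u x) :
    effCondSet c x B * u x ≤ ∑ y, μ y := by
  set a := u x
  have hclip : energyFn c (fun y => min (u y) a) ≤ a * ∑ y, μ y := by
    refine (energyFn_min_le hc0 hcsym u a).trans ?_
    rw [mul_sum]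
    refine sum_le_sum fun y _ => ?_
    by_cases hy : y ∈ B
    · rw [hub y hy, min_eq_left hux.le, zero_mul]
      exact mul_nonneg hux.le (hμ0 y)
    · rw [hLu y hy]
      exact mul_le_mul_of_nonneg_right (min_le_right _ _) (hμ0 y)
  have hcond : effCondSet c x B ≤ energyFn c (fun y => min (u y) a / a) :=
    effCondSet_le_energyFn hc0 (by simp [a, hux.ne'])
      fun b hb => by rw [hub b hb, min_eq_left hux.le, zero_div]
  rw [energyFn_div_const, le_div_iff₀ (by positivity)] at hcond
  refine le_of_mul_le_mul_right ?_ hux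
  calc effCondSet c x B * a * a = effCondSet c x B * a ^ 2 := by ring
    _ ≤ a * ∑ y, μ y := hcond.trans hclip
    _ = (∑ y, μ y) * a := mul_comm _ _

lemma sum_mul_sub_eq_of_eq_one_add_sum (hc0 : ∀ p q, 0 ≤ c p q) {μ : V → ℝ}
    (hμ : ∀ y, μ y = ∑ z, c y z) {P : V → V → ℝ} (hP : ∀ y z, P y z = c y z / μ y)
    {u : V → ℝ} {y : V} (hy : u y = 1 + ∑ z, P y z * u z) :
    ∑ z, c y z * (u y - u z) = μ y := by
  by_cases hμy : μ y = 0
  -- a row with `μ y = 0` vanishes, so the junk value `P y z = c y z / 0 = 0` is harmless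
  · have hc : ∀ z, c y z = 0 := fun z =>
      (sum_eq_zero_iff_of_nonneg fun z _ => hc0 y z).1 ((hμ y).symm.trans hμy) z (mem_univ z)
    simp [hc, hμy]
  · have hPu : μ y * ∑ z, P y z * u z = ∑ z, c y z * u z := by
      simp only [hP, mul_sum, div_mul_eq_mul_div, mul_div_cancel₀ _ hμy]
    simp only [mul_sub, sum_sub_distrib, ← sum_mul, ← hμ]
    rw [← hPu, hy]
    ring

end Network

theorem stmt13_general {V : Type*} [Fintype V] (Adj : V → V → Prop)
    (c : V → V → ℝ) (hcsym : ∀ u v, c u v = c v u)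
    (hpos : ∀ u v, Adj u v → 0 < c u v) (hzero : ∀ u v, ¬ Adj u v → c u v = 0)
    (hconn : ∀ p q : V, ∃ (k : ℕ) (w : ℕ → V), w 0 = p ∧ w k = q ∧
      ∀ i < k, Adj (w i) (w (i + 1)))
    (μ : V → ℝ) (hμ : ∀ y, μ y = ∑ z, c y z)
    (P : V → V → ℝ) (hP : ∀ y z, P y z = c y z / μ y)
    (B : Finset V) (hB : B.Nonempty) (x : V)
    (u : V → ℝ) (hub : ∀ y ∈ B, u y = 0)
    (hu : ∀ y, y ∉ B → u y = 1 + ∑ z, P y z * u z) :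
    u x ≤ effResSet c x B * ∑ y, μ y := by
  have hc0 : ∀ p q, 0 ≤ c p q := fun p q =>
    (em (Adj p q)).elim (fun h => (hpos p q h).le) fun h => (hzero p q h).ge
  have hμ0 : ∀ y, 0 ≤ μ y := fun y => hμ y ▸ sum_nonneg fun z _ => hc0 y z
  rcases le_or_gt (u x) 0 with hux | hux
  · exact hux.trans <| mul_nonneg (inv_nonneg.2 (effCondSet_nonneg hc0 x B))
      (sum_nonneg fun y _ => hμ0 y)
  have hxB : x ∉ B := fun h => hux.ne' (hub x h)
  obtain ⟨b, hb⟩ := hB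
  obtain ⟨k, w, hw0, hwk, hadj⟩ := hconn x b
  have hcond : 0 < effCondSet c x B := effCondSet_pos_of_walk hc0 hcsym hxB hb hw0 hwk
    fun i hi => hpos _ _ (hadj i hi)
  have hbound := effCondSet_mul_le hc0 hcsym hμ0 hub
    (fun y hy => sum_mul_sub_eq_of_eq_one_add_sum hc0 hμ hP (hu y hy)) hux
  rw [effResSet, inv_mul_eq_div, le_div_iff₀ hcond, mul_comm]
  exact hbound

/-- For the random walk on a finite connected weighted graph started at `x`, the expected
time `u(x)` to hit a nonempty set `B` of vertices (the solution of the associated system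
`u ≡ 0` on `B`, `u(y) = 1 + ∑_z P(y,z) u(z)` off `B`) is at most
`R_eff(x, B) · μ(V)`, where `μ(V)` is the total vertex conductance. -/
theorem stmt13 {V : Type*} [Fintype V] (Adj : V → V → Prop) (hsym : Symmetric Adj)
    (c : V → V → ℝ) (hcsym : ∀ u v, c u v = c v u)
    (hpos : ∀ u v, Adj u v → 0 < c u v) (hzero : ∀ u v, ¬ Adj u v → c u v = 0)
    (hconn : ∀ p q : V, ∃ (k : ℕ) (w : ℕ → V), w 0 = p ∧ w k = q ∧
      ∀ i < k, Adj (w i) (w (i + 1)))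
    (μ : V → ℝ) (hμ : ∀ y, μ y = ∑ z, c y z)
    (P : V → V → ℝ) (hP : ∀ y z, P y z = c y z / μ y)
    (B : Finset V) (hB : B.Nonempty) (x : V)
    (u : V → ℝ) (hub : ∀ y ∈ B, u y = 0)
    (hu : ∀ y, y ∉ B → u y = 1 + ∑ z, P y z * u z) :
    u x ≤ effResSet c x B * ∑ y, μ y :=
  stmt13_general Adj c hcsym hpos hzero hconn μ hμ P hP B hB x u hub hu
end
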